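/- In an isolated directed clique on m nodes (every node points to every other node, no other arcs), each node has PageRank score exactly 1/m; moreover, adding one outgoing arc from a single clique node to an external node does not increase the score of any clique node. -/

import Mathlib

/-!
In the clique every node has in-degree and out-degree `m - 1`, so the transition matrix is
column-stochastic; hence so are its powers, and the PageRank series collapses to
`(1 - α)/m · Σ α^τ = 1/m`.

After adding the arc `w0 → e`, the clique still has no arcs coming in from outside, so every walk
ending in the clique stays inside it. On such walks the new transition probabilities are at most
the old ones (only the out-degree of `w0` grows), and this domination passes to every power of the
transition matrix, hence to the PageRank series.
-/

open scoped Classical BigOperators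

/-- Out-degree of `z` in the directed graph with arc relation `A`. -/
noncomputable def outDeg {V : Type*} [Fintype V] (A : V → V → Prop) (z : V) : ℕ :=
  (Finset.univ.filter fun w => A z w).card

/-- Random-surfer one-step transition matrix (rows of dangling nodes are zero). -/
noncomputable def stepM {V : Type*} [Fintype V] (A : V → V → Prop) : Matrix V V ℝ :=
  fun z w => if A z w then 1 / (outDeg A z : ℝ) else 0

/-- PageRank contribution of `z` to `v`:
`P(z,v) = (1-α)/n · Σ_τ α^τ · inf_τ(z,v)` where `inf_τ(z,v) = (M^τ) z v`. -/
noncomputable def contrib {V : Type*} [Fintype V] (α : ℝ) (A : V → V → Prop) (z v : V) : ℝ :=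
  (1 - α) / (Fintype.card V : ℝ) * ∑' τ : ℕ, α ^ τ * (stepM A ^ τ) z v

/-- PageRank score of `v` with damping factor `α`. -/
noncomputable def pagerank {V : Type*} [Fintype V] (α : ℝ) (A : V → V → Prop) (v : V) : ℝ :=
  (1 - α) / (Fintype.card V : ℝ) * ∑' τ : ℕ, α ^ τ * ∑ z, (stepM A ^ τ) z v

namespace Matrix

variable {V : Type*} [Fintype V]

theorem pow_apply_le_one {R : Type*} [Semiring R] [PartialOrder R] [IsOrderedRing R]
    {M : Matrix V V R} (hM : ∀ i j, 0 ≤ M i j) (hrow : ∀ i, ∑ j, M i j ≤ 1) (k : ℕ) (i j : V) :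
    (M ^ k) i j ≤ 1 := by
  induction k generalizing i with
  | zero => rw [pow_zero, one_apply]; split <;> simp
  | succ k ih =>
    calc (M ^ (k + 1)) i j = ∑ l, M i l * (M ^ k) l j := by rw [pow_succ', mul_apply]
      _ ≤ ∑ l, M i l := Finset.sum_le_sum fun l _ => mul_le_of_le_one_right (hM i l) (ih l)
      _ ≤ 1 := hrow i

theorem pow_apply_eq_zero_of_notMem {R : Type*} [Semiring R] {M : Matrix V V R} {C : Set V}
    (hC : ∀ y x, y ∉ C → x ∈ C → M y x = 0) (k : ℕ) {y x : V} (hy : y ∉ C) (hx : x ∈ C) :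
    (M ^ k) y x = 0 := by
  induction k generalizing y with
  | zero => exact one_apply_ne fun h : y = x => hy (h ▸ hx)
  | succ k ih =>
    rw [pow_succ', mul_apply]
    refine Finset.sum_eq_zero fun z _ => ?_
    by_cases hz : z ∈ C
    · rw [hC y z hy hz, zero_mul]
    · rw [ih hz, mul_zero]

/-- Since `M` has no entries from outside `C` into `C`, every `M`-path ending in `C` stays in `C`,
where `M` is dominated by `N`. -/
theorem pow_apply_le_pow_apply_of_closed {M N : Matrix V V ℝ} {C : Set V}
    (hM : ∀ i j, 0 ≤ M i j) (hN : ∀ i j, 0 ≤ N i j)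
    (hC : ∀ y x, y ∉ C → x ∈ C → M y x = 0) (hle : ∀ z y, y ∈ C → M z y ≤ N z y)
    (k : ℕ) (z : V) {x : V} (hx : x ∈ C) : (M ^ k) z x ≤ (N ^ k) z x := by
  induction k generalizing z with
  | zero => rfl
  | succ k ih =>
    rw [pow_succ', pow_succ', mul_apply, mul_apply]
    refine Finset.sum_le_sum fun y _ => ?_
    by_cases hy : y ∈ C
    · exact mul_le_mul (hle z y hy) (ih y) (pow_apply_nonneg hM k y x) (hN z y)
    · rw [pow_apply_eq_zero_of_notMem hC k hy hx, mul_zero]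
      exact mul_nonneg (hN z y) (pow_apply_nonneg hN k y x)

end Matrix

section StepM

variable {V : Type*} [Fintype V]

theorem stepM_nonneg (A : V → V → Prop) (z w : V) : 0 ≤ stepM A z w := by
  unfold stepM; split <;> positivity

theorem sum_stepM_le_one (A : V → V → Prop) (z : V) : ∑ w, stepM A z w ≤ 1 := by
  simp only [stepM, ← Finset.sum_filter, Finset.sum_const, nsmul_eq_mul]
  change (outDeg A z : ℝ) * (1 / outDeg A z) ≤ 1
  rcases eq_or_ne (outDeg A z : ℝ) 0 with h | h
  · simp [h]
  · rw [mul_one_div_cancel h]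

theorem stepM_pow_apply_le_one (A : V → V → Prop) (k : ℕ) (z w : V) :
    (stepM A ^ k) z w ≤ 1 :=
  Matrix.pow_apply_le_one (stepM_nonneg A) (sum_stepM_le_one A) k z w

theorem stepM_le_stepM {A A' : V → V → Prop} {z y : V} (hsub : ∀ w, A z w → A' z w)
    (hy : A' z y → A z y) : stepM A' z y ≤ stepM A z y := by
  by_cases hA' : A' z y
  · have hdeg : outDeg A z ≤ outDeg A' z :=
      Finset.card_le_card fun w => by simpa using hsub w
    have hpos : 0 < outDeg A z := Finset.card_pos.mpr ⟨y, by simpa using hy hA'⟩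
    simp only [stepM, if_pos hA', if_pos (hy hA')]
    gcongr
  · simp only [stepM, if_neg hA']
    exact stepM_nonneg A z y

theorem outDeg_ne (z : V) : outDeg (fun x y : V => x ≠ y) z = Fintype.card V - 1 := by
  rw [outDeg, ← Finset.card_univ, ← Finset.card_erase_of_mem (Finset.mem_univ z)]
  congr 1
  ext w
  simp [eq_comm]

theorem stepM_ne_mem_colStochastic (hV : 2 ≤ Fintype.card V) :
    stepM (fun x y : V => x ≠ y) ∈ Matrix.colStochastic ℝ V := by
  refine Matrix.mem_colStochastic_iff_sum.mpr ⟨stepM_nonneg _, fun v => ?_⟩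
  have hcol : (Finset.univ.filter fun z : V => z ≠ v) = Finset.univ.erase v := by
    ext z; simp
  have hpos : ((Fintype.card V - 1 : ℕ) : ℝ) ≠ 0 := by
    have : Fintype.card V - 1 ≠ 0 := by omega
    exact_mod_cast this
  simp only [stepM, outDeg_ne, ← Finset.sum_filter, hcol, Finset.sum_const,
    Finset.card_erase_of_mem (Finset.mem_univ v), nsmul_eq_mul]
  exact mul_one_div_cancel hpos

end StepM

section PageRank

variable {V : Type*} [Fintype V] {α : ℝ}

theorem summable_pagerank (A : V → V → Prop) (h0 : 0 ≤ α) (h1 : α < 1) (v : V) :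
    Summable fun τ : ℕ => α ^ τ * ∑ z, (stepM A ^ τ) z v := by
  refine Summable.of_nonneg_of_le (fun τ => ?_) (fun τ => ?_)
    ((summable_geometric_of_lt_one h0 h1).mul_right (Fintype.card V : ℝ))
  · exact mul_nonneg (pow_nonneg h0 τ)
      (Finset.sum_nonneg fun z _ => Matrix.pow_apply_nonneg (stepM_nonneg A) τ z v)
  · refine mul_le_mul_of_nonneg_left ?_ (pow_nonneg h0 τ)
    calc ∑ z, (stepM A ^ τ) z v ≤ ∑ _z : V, (1 : ℝ) :=
          Finset.sum_le_sum fun z _ => stepM_pow_apply_le_one A τ z v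
      _ = Fintype.card V := by simp

theorem pagerank_eq_of_mem_colStochastic {A : V → V → Prop}
    (hA : stepM A ∈ Matrix.colStochastic ℝ V) (h0 : 0 ≤ α) (h1 : α < 1) (v : V) :
    pagerank α A v = 1 / Fintype.card V := by
  have hcol (τ : ℕ) : ∑ z, (stepM A ^ τ) z v = 1 :=
    Matrix.sum_col_of_mem_colStochastic (pow_mem hA τ) v
  have hα : 1 - α ≠ 0 := by linarith
  have hV : (Fintype.card V : ℝ) ≠ 0 := by
    exact_mod_cast (Fintype.card_pos_iff.mpr ⟨v⟩).ne'
  simp only [pagerank, hcol, mul_one, tsum_geometric_of_lt_one h0 h1]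
  field_simp

theorem pagerank_le_pagerank_of_closed {A A' : V → V → Prop} {C : Set V}
    (h0 : 0 ≤ α) (h1 : α < 1) (hC : ∀ y x, A' y x → x ∈ C → y ∈ C)
    (hle : ∀ z y, y ∈ C → stepM A' z y ≤ stepM A z y) {x : V} (hx : x ∈ C) :
    pagerank α A' x ≤ pagerank α A x := by
  have hM : ∀ y x, y ∉ C → x ∈ C → stepM A' y x = 0 := fun y x hy hx => by
    simp only [stepM, if_neg fun h => hy (hC y x h hx)]
  refine mul_le_mul_of_nonneg_left ?_ (div_nonneg (by linarith) (Nat.cast_nonneg _))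
  refine (summable_pagerank A' h0 h1 x).tsum_le_tsum (fun τ => ?_) (summable_pagerank A h0 h1 x)
  refine mul_le_mul_of_nonneg_left (Finset.sum_le_sum fun z _ => ?_) (pow_nonneg h0 τ)
  exact Matrix.pow_apply_le_pow_apply_of_closed (stepM_nonneg A') (stepM_nonneg A) hM hle τ z hx

end PageRank

/-- (i) In an isolated directed clique on `m` nodes (every node points to every other
node), each node has PageRank exactly `1/m`. (ii) If a clique sits inside a larger graph
with no other arcs touching it, adding one out-arc from a clique node `w0` to an external
node `e` does not increase the PageRank score of any clique node. -/
theorem stmt_13 (α : ℝ) (hα : α ∈ Set.Ioo (0:ℝ) 1) :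
    (∀ (V : Type) [Fintype V], ∀ m : ℕ, m = Fintype.card V → 2 ≤ m →
      ∀ v : V, pagerank α (fun x y : V => x ≠ y) v = 1 / (m : ℝ)) ∧
    (∀ (W : Type) [Fintype W], ∀ (C : Set W) (w0 e : W), w0 ∈ C → e ∉ C →
      ∀ B : W → W → Prop,
        (∀ x y, x ∈ C → (B x y ↔ (y ∈ C ∧ x ≠ y))) →
        (∀ x y, B x y → y ∈ C → x ∈ C) →
        ∀ x ∈ C,
          pagerank α (fun a b => B a b ∨ (a = w0 ∧ b = e)) x ≤ pagerank α B x) := by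
  obtain ⟨hα0, hα1⟩ := hα
  refine ⟨fun V _ m hm h2 v => ?_, fun W _ C w0 e _ he B _ hB x hx => ?_⟩
  · subst hm
    exact pagerank_eq_of_mem_colStochastic (stepM_ne_mem_colStochastic h2) hα0.le hα1 v
  · refine pagerank_le_pagerank_of_closed hα0.le hα1 ?_ (fun z y hy => ?_) hx
    · rintro a b (hab | ⟨-, rfl⟩) hb
      exacts [hB a b hab hb, absurd hb he]
    · refine stepM_le_stepM (fun w => Or.inl) ?_
      rintro (hzy | ⟨-, rfl⟩)
      exacts [hzy, absurd hy he]
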